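/- For the fan graph F_{m,n} (the join of the edgeless graph on m vertices with the path P_n): χ_ei(F_{1,2}) = 1; χ_ei(F_{m,2}) = m + 1 for m ≥ 2; and χ_ei(F_{m,n}) = m + n whenever (m = 1 and n ≥ 4) or (m ≥ 2 and n ≥ 3). -/

import Mathlib

open SimpleGraph

/-- `u` and `v` are the endpoints of a path on 4 vertices (a `P₄`, of length 3) in `G`:
a walk `u - x - y - v` with pairwise distinct vertices and consecutive vertices adjacent. -/
def P4Ends {V : Type*} (G : SimpleGraph V) (u v : V) : Prop :=
  ∃ x y : V, u ≠ x ∧ u ≠ y ∧ u ≠ v ∧ x ≠ y ∧ x ≠ v ∧ y ≠ v ∧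
    G.Adj u x ∧ G.Adj x y ∧ G.Adj y v

/-- `f` is an e-injective coloring of `G` (with colors in `Fin k`). -/
def IsEInjColoring {V : Type*} (G : SimpleGraph V) {k : ℕ} (f : V → Fin k) : Prop :=
  ∀ u v : V, P4Ends G u v → f u ≠ f v

/-- The e-injective chromatic number `χ_ei`. -/
noncomputable def eChi {V : Type*} (G : SimpleGraph V) : ℕ :=
  sInf {k : ℕ | ∃ f : V → Fin k, IsEInjColoring G f}

/-- The usual chromatic number, as a natural number. -/
noncomputable def chi {V : Type*} (G : SimpleGraph V) : ℕ :=
  sInf {k : ℕ | ∃ f : V → Fin k, ∀ u v : V, G.Adj u v → f u ≠ f v}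

/-- The injective chromatic number `χ_i`. -/
noncomputable def iChi {V : Type*} (G : SimpleGraph V) : ℕ :=
  sInf {k : ℕ | ∃ f : V → Fin k, ∀ u v : V, u ≠ v →
    (∃ w, G.Adj w u ∧ G.Adj w v) → f u ≠ f v}

/-- The 2-distance chromatic number `χ₂`. -/
noncomputable def dist2Chi {V : Type*} (G : SimpleGraph V) : ℕ :=
  sInf {k : ℕ | ∃ f : V → Fin k, ∀ u v : V, u ≠ v →
    (G.Adj u v ∨ ∃ w, G.Adj u w ∧ G.Adj w v) → f u ≠ f v}

/-- The join `G ∨ H` of two graphs on disjoint vertex sets. -/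
def joinGraph {V W : Type*} (G : SimpleGraph V) (H : SimpleGraph W) :
    SimpleGraph (V ⊕ W) where
  Adj x y :=
    match x, y with
    | Sum.inl a, Sum.inl b => G.Adj a b
    | Sum.inr a, Sum.inr b => H.Adj a b
    | Sum.inl _, Sum.inr _ => True
    | Sum.inr _, Sum.inl _ => True
  symm := ⟨by rintro (a | a) (b | b) h <;> simp_all <;> exact h.symm⟩
  loopless := ⟨by rintro (a | a) h <;> simp_all⟩

/-- The strong product `G ⊠ H`. -/
def strongProd {V W : Type*} (G : SimpleGraph V) (H : SimpleGraph W) :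
    SimpleGraph (V × W) where
  Adj x y := (x.1 = y.1 ∧ H.Adj x.2 y.2) ∨ (x.2 = y.2 ∧ G.Adj x.1 y.1) ∨
    (G.Adj x.1 y.1 ∧ H.Adj x.2 y.2)
  symm := by
    constructor
    rintro ⟨a, u⟩ ⟨b, v⟩ (⟨h1, h2⟩ | ⟨h1, h2⟩ | ⟨h1, h2⟩)
    · exact Or.inl ⟨h1.symm, h2.symm⟩
    · exact Or.inr (Or.inl ⟨h1.symm, h2.symm⟩)
    · exact Or.inr (Or.inr ⟨h1.symm, h2.symm⟩)
  loopless := ⟨by rintro ⟨a, u⟩ (⟨_, h⟩ | ⟨_, h⟩ | ⟨h, _⟩) <;> exact h.ne rfl⟩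


section AuxLemmas

variable {V W : Type*}

lemma join_adj_lr (G : SimpleGraph V) (H : SimpleGraph W) (a : V) (b : W) :
    (joinGraph G H).Adj (Sum.inl a) (Sum.inr b) := trivial

lemma join_adj_rl (G : SimpleGraph V) (H : SimpleGraph W) (a : W) (b : V) :
    (joinGraph G H).Adj (Sum.inr a) (Sum.inl b) := trivial

lemma join_adj_rr_iff (G : SimpleGraph V) (H : SimpleGraph W) (a b : W) :
    (joinGraph G H).Adj (Sum.inr a) (Sum.inr b) ↔ H.Adj a b := Iff.rfl

lemma join_adj_ll_iff (G : SimpleGraph V) (H : SimpleGraph W) (a b : V) :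
    (joinGraph G H).Adj (Sum.inl a) (Sum.inl b) ↔ G.Adj a b := Iff.rfl

lemma P4Ends_symm {G : SimpleGraph V} {u v : V} (h : P4Ends G u v) : P4Ends G v u := by
  obtain ⟨x, y, h1, h2, h3, h4, h5, h6, a1, a2, a3⟩ := h
  exact ⟨y, x, h6.symm, h5.symm, h3.symm, h4.symm, h2.symm, h1.symm, a3.symm, a2.symm, a1.symm⟩

lemma eChi_eq_card [Fintype V] (G : SimpleGraph V)
    (h : ∀ u v : V, u ≠ v → P4Ends G u v) : eChi G = Fintype.card V := by
  have hmem : Fintype.card V ∈ {k : ℕ | ∃ f : V → Fin k, IsEInjColoring G f} := by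
    refine ⟨fun v => Fintype.equivFin V v, fun u v hp he => ?_⟩
    obtain ⟨x, y, _, _, huv, _⟩ := hp
    exact huv ((Fintype.equivFin V).injective he)
  refine le_antisymm (Nat.sInf_le hmem) (le_csInf ⟨_, hmem⟩ ?_)
  rintro k ⟨f, hf⟩
  have hinj : Function.Injective f := by
    intro u v he
    by_contra hne
    exact hf u v (h u v hne) he
  simpa using Fintype.card_le_of_injective f hinj

/-- pair of independent vertices -/
lemma pair_ll {m n : ℕ} (hn : 2 ≤ n) (i j : Fin m) (hij : i ≠ j) :
    P4Ends (joinGraph (⊥ : SimpleGraph (Fin m)) (pathGraph n)) (Sum.inl i) (Sum.inl j) := by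
  refine ⟨Sum.inr ⟨0, by omega⟩, Sum.inr ⟨1, by omega⟩, by simp, by simp, by simp [hij],
    by simp [Fin.ext_iff], by simp, by simp, join_adj_lr .., ?_, (join_adj_rl ..)⟩
  rw [join_adj_rr_iff, pathGraph_adj]
  simp

/-- independent vertex vs path vertex, when m ≥ 2 -/
lemma pair_lr_apex {m n : ℕ} (hm : 2 ≤ m) (hn : 2 ≤ n) (i : Fin m) (a : Fin n) :
    P4Ends (joinGraph (⊥ : SimpleGraph (Fin m)) (pathGraph n)) (Sum.inl i) (Sum.inr a) := by
  have hj : ∃ j : Fin m, j ≠ i := by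
    by_cases hi : i.val = 0
    · exact ⟨⟨1, by omega⟩, by simp [Fin.ext_iff, hi]⟩
    · exact ⟨⟨0, by omega⟩, by simp [Fin.ext_iff]; omega⟩
  have hb : ∃ b : Fin n, b ≠ a := by
    by_cases ha : a.val = 0
    · exact ⟨⟨1, by omega⟩, by simp [Fin.ext_iff, ha]⟩
    · exact ⟨⟨0, by omega⟩, by simp [Fin.ext_iff]; omega⟩
  obtain ⟨j, hj⟩ := hj
  obtain ⟨b, hb⟩ := hb
  exact ⟨Sum.inr b, Sum.inl j, by simp, by simp [hj.symm], by simp,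
    by simp, by simp [hb], by simp, join_adj_lr .., join_adj_rl .., join_adj_lr ..⟩

/-- independent vertex vs path vertex, when n ≥ 4 -/
lemma pair_lr_path {m n : ℕ} (hn : 4 ≤ n) (i : Fin m) (a : Fin n) :
    P4Ends (joinGraph (⊥ : SimpleGraph (Fin m)) (pathGraph n)) (Sum.inl i) (Sum.inr a) := by
  by_cases ha : a.val ≤ 1
  · refine ⟨Sum.inr ⟨a.val + 2, by omega⟩, Sum.inr ⟨a.val + 1, by omega⟩, by simp, by simp,
      by simp, by simp [Fin.ext_iff], by simp [Fin.ext_iff], by simp [Fin.ext_iff],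
      join_adj_lr .., ?_, ?_⟩ <;>
    · rw [join_adj_rr_iff, pathGraph_adj]; simp
  · refine ⟨Sum.inr ⟨a.val - 2, by omega⟩, Sum.inr ⟨a.val - 1, by omega⟩, by simp, by simp,
      by simp, by simp [Fin.ext_iff]; omega, by simp [Fin.ext_iff]; omega,
      by simp [Fin.ext_iff]; omega, join_adj_lr .., ?_, ?_⟩ <;>
    · rw [join_adj_rr_iff, pathGraph_adj]; simp; omega

/-- two path vertices, a < b -/
lemma pair_rr {m n : ℕ} (hm : 1 ≤ m) (hn : 3 ≤ n) (a b : Fin n) (hab : a.val < b.val) :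
    P4Ends (joinGraph (⊥ : SimpleGraph (Fin m)) (pathGraph n)) (Sum.inr a) (Sum.inr b) := by
  rcases lt_or_ge (a.val + 1) b.val with hb2 | hb1
  · -- nonadjacent: a - (a+1) - apex - b
    refine ⟨Sum.inr ⟨a.val + 1, by omega⟩, Sum.inl ⟨0, by omega⟩, by simp [Fin.ext_iff],
      by simp, by simp [Fin.ext_iff]; omega, by simp, by simp [Fin.ext_iff]; omega,
      by simp, ?_, join_adj_rl .., join_adj_lr ..⟩
    rw [join_adj_rr_iff, pathGraph_adj]; simp
  · have hb : b.val = a.val + 1 := by omega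
    by_cases ha0 : a.val = 0
    · -- 0 - apex - 2 - 1
      refine ⟨Sum.inl ⟨0, by omega⟩, Sum.inr ⟨2, by omega⟩, by simp, by simp [Fin.ext_iff]; omega,
        by simp [Fin.ext_iff]; omega, by simp, by simp, by simp [Fin.ext_iff]; omega,
        join_adj_rl .., join_adj_lr .., ?_⟩
      rw [join_adj_rr_iff, pathGraph_adj]; simp; omega
    · -- a - (a-1) - apex - b
      refine ⟨Sum.inr ⟨a.val - 1, by omega⟩, Sum.inl ⟨0, by omega⟩, by simp [Fin.ext_iff]; omega,
        by simp, by simp [Fin.ext_iff]; omega, by simp, by simp [Fin.ext_iff]; omega,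
        by simp, ?_, join_adj_rl .., join_adj_lr ..⟩
      rw [join_adj_rr_iff, pathGraph_adj]; simp; omega

lemma allPairs {m n : ℕ} (hm : 1 ≤ m) (hn : 3 ≤ n) (hor : 2 ≤ m ∨ 4 ≤ n) :
    ∀ u v : Fin m ⊕ Fin n, u ≠ v →
      P4Ends (joinGraph (⊥ : SimpleGraph (Fin m)) (pathGraph n)) u v := by
  have hlr : ∀ (i : Fin m) (a : Fin n),
      P4Ends (joinGraph (⊥ : SimpleGraph (Fin m)) (pathGraph n)) (Sum.inl i) (Sum.inr a) := by
    rcases hor with h2 | h4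
    · exact fun i a => pair_lr_apex h2 (by omega) i a
    · exact fun i a => pair_lr_path h4 i a
  rintro (i | a) (j | b) huv
  · exact pair_ll (by omega) i j (by simpa using huv)
  · exact hlr i b
  · exact P4Ends_symm (hlr j a)
  · rcases lt_or_gt_of_ne (show a.val ≠ b.val by
      intro h; exact huv (by simp [Fin.ext_iff, h])) with h | h
    · exact pair_rr hm hn a b h
    · exact P4Ends_symm (pair_rr hm hn b a h)

end AuxLemmas

theorem stmt_16 :
    (eChi (joinGraph (⊥ : SimpleGraph (Fin 1)) (pathGraph 2)) = 1) ∧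
    (∀ m : ℕ, 2 ≤ m → eChi (joinGraph (⊥ : SimpleGraph (Fin m)) (pathGraph 2)) = m + 1) ∧
    (∀ m n : ℕ, (m = 1 ∧ 4 ≤ n) ∨ (2 ≤ m ∧ 3 ≤ n) →
      eChi (joinGraph (⊥ : SimpleGraph (Fin m)) (pathGraph n)) = m + n) := by
  refine ⟨?_, ?_, ?_⟩
  · -- F_{1,2}: no P4 exists since only 3 vertices
    have noP4 : ∀ u v : Fin 1 ⊕ Fin 2,
        ¬ P4Ends (joinGraph (⊥ : SimpleGraph (Fin 1)) (pathGraph 2)) u v := by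
      rintro u v ⟨x, y, h1, h2, h3, h4, h5, h6, -, -, -⟩
      have hcard : Fintype.card (Fin 1 ⊕ Fin 2) < Fintype.card (Fin 4) := by simp
      obtain ⟨i, j, hij, hfij⟩ :=
        Fintype.exists_ne_map_eq_of_card_lt (![u, x, y, v]) hcard
      fin_cases i <;> fin_cases j <;> simp_all
    have hmem : 1 ∈ {k : ℕ | ∃ f : Fin 1 ⊕ Fin 2 → Fin k,
        IsEInjColoring (joinGraph (⊥ : SimpleGraph (Fin 1)) (pathGraph 2)) f} :=
      ⟨fun _ => 0, fun u v hp => absurd hp (noP4 u v)⟩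
    refine le_antisymm (Nat.sInf_le hmem) (Nat.one_le_iff_ne_zero.2 fun h0 => ?_)
    rw [eChi, Nat.sInf_eq_zero] at h0
    rcases h0 with ⟨f, -⟩ | hemp
    · exact (f (Sum.inl 0)).elim0
    · rw [hemp] at hmem; exact hmem
  · -- F_{m,2} for m ≥ 2
    intro m hm
    set G := joinGraph (⊥ : SimpleGraph (Fin m)) (pathGraph 2) with hG
    have hmem : m + 1 ∈ {k : ℕ | ∃ f : Fin m ⊕ Fin 2 → Fin k, IsEInjColoring G f} := by
      refine ⟨fun v => match v with
        | Sum.inl i => ⟨i.val, by omega⟩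
        | Sum.inr _ => ⟨m, by omega⟩, ?_⟩
      rintro (i | a) (j | b) hp he
      · obtain ⟨x, y, _, _, huv, _⟩ := hp
        have he' : (⟨i.val, by omega⟩ : Fin (m + 1)) = ⟨j.val, by omega⟩ := he
        have hv : i.val = j.val := by simpa using he'
        exact huv (congrArg Sum.inl (Fin.ext hv))
      · have he' : (⟨i.val, by omega⟩ : Fin (m + 1)) = ⟨m, by omega⟩ := he
        have : i.val = m := by simpa using he'
        have := i.isLt
        omega
      · have he' : (⟨m, by omega⟩ : Fin (m + 1)) = ⟨j.val, by omega⟩ := he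
        have : m = j.val := by simpa using he'
        have := j.isLt
        omega
      · -- no P4 between the two path vertices
        obtain ⟨x, y, h1, h2, h3, h4, h5, h6, a1, a2, a3⟩ := hp
        have hab : a ≠ b := by simpa using h3
        rcases x with p | c
        · rcases y with q | d
          · exact a2
          · have hda : d ≠ a := fun h => h2 (by simp [h])
            have hdb : d ≠ b := fun h => h6 (by simp [h])
            have := a.isLt; have := b.isLt; have := d.isLt
            have : a.val ≠ b.val := fun h => hab (Fin.ext h)
            have : d.val ≠ a.val := fun h => hda (Fin.ext h)
            have : d.val ≠ b.val := fun h => hdb (Fin.ext h)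
            omega
        · have hca : c ≠ a := fun h => h1 (by simp [h])
          have hcb : c ≠ b := fun h => h5 (by simp [h])
          have := a.isLt; have := b.isLt; have := c.isLt
          have : a.val ≠ b.val := fun h => hab (Fin.ext h)
          have : c.val ≠ a.val := fun h => hca (Fin.ext h)
          have : c.val ≠ b.val := fun h => hcb (Fin.ext h)
          omega
    refine le_antisymm (Nat.sInf_le hmem) (le_csInf ⟨_, hmem⟩ ?_)
    rintro k ⟨f, hf⟩
    -- the m apex vertices plus one path vertex are pairwise P4-connected
    set h : Fin (m + 1) → Fin m ⊕ Fin 2 := fun i =>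
      if hc : i.val < m then Sum.inl ⟨i.val, hc⟩ else Sum.inr ⟨0, by omega⟩ with hh
    have hP4 : ∀ i j : Fin (m + 1), i ≠ j → P4Ends G (h i) (h j) := by
      have key : ∀ p : Fin m, P4Ends G (Sum.inl p) (Sum.inr ⟨0, by omega⟩) :=
        fun p => pair_lr_apex hm (by omega) p _
      intro i j hij
      have hvij : i.val ≠ j.val := fun h => hij (Fin.ext h)
      by_cases hi : i.val < m <;> by_cases hj : j.val < m <;> simp only [hh, hi, hj,
        dif_pos, dif_neg, not_false_eq_true, dite_true, dite_false]
      · exact pair_ll (by omega) _ _ (by simp [Fin.ext_iff]; omega)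
      · exact key _
      · exact P4Ends_symm (key _)
      · omega
    have hinj : Function.Injective (fun i => f (h i)) := by
      intro i j he
      by_contra hne
      exact hf _ _ (hP4 i j hne) he
    simpa using Fintype.card_le_of_injective _ hinj
  · -- general case
    intro m n hcase
    have hm : 1 ≤ m := by rcases hcase with ⟨h, -⟩ | ⟨h, -⟩ <;> omega
    have hn : 3 ≤ n := by rcases hcase with ⟨-, h⟩ | ⟨-, h⟩ <;> omega
    have hor : 2 ≤ m ∨ 4 ≤ n := by
      rcases hcase with ⟨-, h⟩ | ⟨h, -⟩
      · exact Or.inr h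
      · exact Or.inl h
    have := eChi_eq_card (joinGraph (⊥ : SimpleGraph (Fin m)) (pathGraph n))
      (allPairs hm hn hor)
    simpa using this
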